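/- arXiv:1306.3831 — 2 statements merged into one kernel-verified Lean document; each statement's English description precedes it below -/
import Mathlib

section
/- Let α ∈ (0,1), ε ∈ (0,1) and K_ε(x) = x/max(|x|,ε)^{α+1} on ℝ². Then for every x with |x| ≠ ε, K_ε is differentiable at x with div K_ε(x) = (1−α)/|x|^{α+1} if |x| > ε and div K_ε(x) = 2/ε^{α+1} if |x| < ε; in particular, div K_ε(x) ≤ 2/|x|^{α+1} for every x ≠ 0 with |x| ≠ ε. -/
/-!
Off the circle `‖x‖ = ε` the kernel agrees near `x` either with the dilation `x / ε^(α+1)` or with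
the homogeneous field `‖x‖^(-(α+1)) x`. For a scalar field `φ` one has
`div (φ x) = n φ + Dφ(x) x`, and Euler's identity `D(‖·‖^s)(x) x = s ‖x‖^s` turns the second case into
`(2 - (α + 1)) ‖x‖^(-(α+1))`.
-/

open Filter Topology

section Divergence

variable {ι : Type*} [Fintype ι] [DecidableEq ι]

noncomputable def divergence (F : EuclideanSpace ℝ ι → EuclideanSpace ℝ ι) (x : EuclideanSpace ℝ ι) : ℝ :=
  ∑ i, fderiv ℝ F x (EuclideanSpace.single i 1) i

theorem Filter.EventuallyEq.divergence_eq {F G : EuclideanSpace ℝ ι → EuclideanSpace ℝ ι}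
    {x : EuclideanSpace ℝ ι} (h : F =ᶠ[𝓝 x] G) : divergence F x = divergence G x := by
  rw [divergence, divergence, h.fderiv_eq]

theorem divergence_smul_id {φ : EuclideanSpace ℝ ι → ℝ} {x : EuclideanSpace ℝ ι}
    (hφ : DifferentiableAt ℝ φ x) :
    divergence (fun y => φ y • y) x = Fintype.card ι * φ x + fderiv ℝ φ x x := by
  have hx_sum : ∑ i, x i • EuclideanSpace.single i (1 : ℝ) = x := by
    simpa [EuclideanSpace.basisFun_apply] using (EuclideanSpace.basisFun ι ℝ).sum_repr x
  rw [divergence, fderiv_fun_smul (f := fun y => y) hφ differentiableAt_fun_id]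
  have hDx : ∑ i, x i * fderiv ℝ φ x (EuclideanSpace.single i 1) = fderiv ℝ φ x x := by
    simpa using congrArg (fderiv ℝ φ x) hx_sum
  simp [Finset.sum_add_distrib, mul_comm, hDx]

theorem divergence_const_smul_id (c : ℝ) (x : EuclideanSpace ℝ ι) :
    divergence (fun y => c • y) x = Fintype.card ι * c := by
  simpa using divergence_smul_id (differentiableAt_const c) (x := x)

end Divergence

theorem DifferentiableAt.fderiv_norm_rpow_self {E : Type*} [NormedAddCommGroup E]
    [NormedSpace ℝ E] {x : E} (h : DifferentiableAt ℝ (‖·‖) x) (hx : x ≠ 0) (s : ℝ) :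
    fderiv ℝ (fun y => ‖y‖ ^ s) x x = s * ‖x‖ ^ s := by
  have hx' : ‖x‖ ≠ 0 := norm_ne_zero_iff.mpr hx
  rw [(h.hasFDerivAt.rpow_const (Or.inl hx')).fderiv, smul_apply,
    h.fderiv_norm_self, smul_eq_mul, Real.rpow_sub_one hx']
  field_simp

theorem divergence_norm_rpow_smul_id {ι : Type*} [Fintype ι] [DecidableEq ι]
    {x : EuclideanSpace ℝ ι} (hx : x ≠ 0) (s : ℝ) :
    divergence (fun y => ‖y‖ ^ s • y) x = (Fintype.card ι + s) * ‖x‖ ^ s := by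
  have hnorm : DifferentiableAt ℝ (‖·‖) x := differentiableAt_id.norm ℝ hx
  rw [divergence_smul_id (hnorm.rpow_const (Or.inl (norm_ne_zero_iff.mpr hx))),
    hnorm.fderiv_norm_rpow_self hx]
  ring

section MaxNorm

variable {E : Type*} [SeminormedAddCommGroup E] {x : E} {ε : ℝ}

theorem eventually_max_norm_eq_left (h : ε < ‖x‖) : ∀ᶠ y in 𝓝 x, max ‖y‖ ε = ‖y‖ :=
  (continuousAt_const.eventually_lt continuous_norm.continuousAt h).mono
    fun _ hy => max_eq_left hy.le

theorem eventually_max_norm_eq_right (h : ‖x‖ < ε) : ∀ᶠ y in 𝓝 x, max ‖y‖ ε = ε :=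
  (continuous_norm.continuousAt.eventually_lt continuousAt_const h).mono
    fun _ hy => max_eq_right hy.le

end MaxNorm

/-- For `α, ε ∈ (0,1)` and `K_ε(x) = x / max(‖x‖,ε)^(α+1)` on `ℝ²`:
for every `x` with `‖x‖ ≠ ε`, `K_ε` is differentiable at `x` and its divergence equals
`(1−α)/‖x‖^(α+1)` if `‖x‖ > ε` and `2/ε^(α+1)` if `‖x‖ < ε`; in particular
`div K_ε(x) ≤ 2/‖x‖^(α+1)` for every `x ≠ 0` with `‖x‖ ≠ ε`. -/
theorem regularized_kernel_div (α ε : ℝ) (hα : α ∈ Set.Ioo (0 : ℝ) 1)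
    (hε : ε ∈ Set.Ioo (0 : ℝ) 1)
    (Kε : EuclideanSpace ℝ (Fin 2) → EuclideanSpace ℝ (Fin 2))
    (hKε : ∀ x : EuclideanSpace ℝ (Fin 2), Kε x = (1 / (max ‖x‖ ε) ^ (α + 1)) • x) :
    (∀ x : EuclideanSpace ℝ (Fin 2), ‖x‖ ≠ ε →
      DifferentiableAt ℝ Kε x ∧
      (ε < ‖x‖ →
        ∑ i : Fin 2, fderiv ℝ Kε x (EuclideanSpace.single i 1) i = (1 - α) / ‖x‖ ^ (α + 1)) ∧
      (‖x‖ < ε →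
        ∑ i : Fin 2, fderiv ℝ Kε x (EuclideanSpace.single i 1) i = 2 / ε ^ (α + 1))) ∧
    (∀ x : EuclideanSpace ℝ (Fin 2), x ≠ 0 → ‖x‖ ≠ ε →
      ∑ i : Fin 2, fderiv ℝ Kε x (EuclideanSpace.single i 1) i ≤ 2 / ‖x‖ ^ (α + 1)) := by
  obtain ⟨hα0, -⟩ := hα
  obtain ⟨hε0, -⟩ := hε
  have ne_zero {x : EuclideanSpace ℝ (Fin 2)} (h : ε < ‖x‖) : x ≠ 0 :=
    norm_pos_iff.mp (hε0.trans h)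
  have near_inner {x} (h : ‖x‖ < ε) : Kε =ᶠ[𝓝 x] fun y => (1 / ε ^ (α + 1)) • y :=
    (eventually_max_norm_eq_right h).mono fun y hy => by rw [hKε, hy]
  have near_outer {x} (h : ε < ‖x‖) : Kε =ᶠ[𝓝 x] fun y => ‖y‖ ^ (-(α + 1)) • y :=
    (eventually_max_norm_eq_left h).mono fun y hy => by
      dsimp only
      rw [hKε, hy, one_div, Real.rpow_neg (norm_nonneg y)]
  have div_inner {x} (h : ‖x‖ < ε) : divergence Kε x = 2 / ε ^ (α + 1) := by
    rw [(near_inner h).divergence_eq, divergence_const_smul_id]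
    simp [div_eq_mul_inv]
  have div_outer {x} (h : ε < ‖x‖) : divergence Kε x = (1 - α) / ‖x‖ ^ (α + 1) := by
    rw [(near_outer h).divergence_eq, divergence_norm_rpow_smul_id (ne_zero h),
      Real.rpow_neg (norm_nonneg x)]
    simp only [Fintype.card_fin, Nat.cast_ofNat]
    ring
  refine ⟨fun x hx => ⟨?_, div_outer, div_inner⟩, fun x hx0 hxε => ?_⟩
  · rcases hx.lt_or_gt with h | h
    · exact DifferentiableAt.congr_of_eventuallyEq (by fun_prop) (near_inner h)
    · refine DifferentiableAt.congr_of_eventuallyEq ?_ (near_outer h)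
      exact ((differentiableAt_id.norm ℝ (ne_zero h)).rpow_const
        (Or.inl (hε0.trans h).ne')).smul differentiableAt_id
  · have hx : 0 < ‖x‖ := norm_pos_iff.mpr hx0
    change divergence Kε x ≤ _
    rcases hxε.lt_or_gt with h | h
    · rw [div_inner h]
      gcongr
    · rw [div_outer h]
      gcongr
      linarith
end

section
/- Let f be a weakly differentiable probability density on ℝ² with finite Fisher information I(f) = ∫_{ℝ²} |∇f|²/f dx. Then: (a) for every p ∈ [1,∞) there is a constant C_p (independent of f) with ‖f‖_{L^p(ℝ²)} ≤ C_p I(f)^{1−1/p}; (b) for every q ∈ [1,2) there is a constant C_q (independent of f) with ‖∇f‖_{L^q(ℝ²)} ≤ C_q I(f)^{3/2−1/q}. -/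
/-!
Along horizontal lines `|g(x, y)| ≤ ∫ |∂₁g(t, y)| dt`, along vertical ones
`|g(x, y)| ≤ ∫ |∂₂g(x, s)| ds`; multiplying the two and integrating gives the
Gagliardo–Nirenberg–Sobolev inequality `∫ g² ≤ (∫ |∇g|)²` in the plane. Applied to `g = f ^ s`,
where `|∇(f ^ s)| = s f ^ (s - 1/2) · |∇f| / √f`, and followed by Cauchy–Schwarz, it yields
`∫ f ^ (2s) ≤ s² (∫ f ^ (2s - 1)) I(f)`. Starting from `∫ f = 1` and `∫ f² ≤ I(f)` (the case
`s = 1`), Hölder interpolation on `[1, 2]` and induction on `⌈r⌉` give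
`∫ f ^ r ≤ C_r I(f) ^ (r - 1)` for every `r ≥ 1`, which is (a). For (b), Hölder's inequality
`∫ |∇f| ^ q = ∫ f ^ (q/2) (|∇f|²/f) ^ (q/2) ≤ (∫ f ^ (q/(2-q))) ^ (1 - q/2) I(f) ^ (q/2)`
reduces the claim to (a) with exponent `q / (2 - q)`.
-/

noncomputable section

open MeasureTheory Filter Set
open scoped ENNReal NNReal

theorem ENNReal.coe_mul_rpow_rpow (K : ℝ≥0) (x : ℝ≥0∞) (e : ℝ) {c : ℝ} (hc : 0 ≤ c) :
    ((K : ℝ≥0∞) * x ^ e) ^ c = ((K ^ c : ℝ≥0) : ℝ≥0∞) * x ^ (e * c) := by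
  rw [ENNReal.mul_rpow_of_nonneg _ _ hc, ENNReal.coe_rpow_of_nonneg _ hc, ← ENNReal.rpow_mul]

theorem ENNReal.ofReal_coe_mul_rpow (K : ℝ≥0) {x e : ℝ} (hx : 0 ≤ x) (he : 0 ≤ e) :
    ENNReal.ofReal (K * x ^ e) = K * ENNReal.ofReal x ^ e := by
  rw [ENNReal.ofReal_mul K.coe_nonneg, ENNReal.ofReal_coe_nnreal,
    ENNReal.ofReal_rpow_of_nonneg hx he]

theorem enorm_le_lintegral_enorm_deriv {F : Type*} [NormedAddCommGroup F] [NormedSpace ℝ F]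
    [CompleteSpace F] {h h' : ℝ → F} (hd : ∀ t, HasDerivAt h (h' t) t) (hh : Integrable h)
    (hh' : Integrable h') (x : ℝ) : ‖h x‖ₑ ≤ ∫⁻ t, ‖h' t‖ₑ := by
  have hlim : Tendsto h atBot (nhds 0) :=
    tendsto_zero_of_hasDerivAt_of_integrableOn_Iic (a := x) (fun t _ => hd t)
      hh'.integrableOn hh.integrableOn
  have hftc : ∫ t in Iic x, h' t = h x := by
    rw [integral_Iic_of_hasDerivAt_of_tendsto' (fun t _ => hd t) hh'.integrableOn hlim, sub_zero]
  rw [← ofReal_integral_norm_eq_lintegral_enorm hh', ← ofReal_norm, ← hftc]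
  refine ENNReal.ofReal_le_ofReal ((norm_integral_le_integral_norm _).trans ?_)
  exact setIntegral_le_integral hh'.norm (Eventually.of_forall fun _ => norm_nonneg _)

theorem ae_enorm_le_lintegral_enorm_partial_fst {G : ℝ × ℝ → ℝ} (hG : Differentiable ℝ G)
    (hint : Integrable G) (h₁ : Integrable fun z => fderiv ℝ G z (1, 0)) :
    ∀ᵐ z : ℝ × ℝ, ‖G z‖ₑ ≤ ∫⁻ t, ‖fderiv ℝ G (t, z.2) (1, 0)‖ₑ := by
  rw [Measure.volume_eq_prod] at hint h₁ ⊢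
  have hslice : ∀ᵐ y : ℝ, ∀ x, ‖G (x, y)‖ₑ ≤ ∫⁻ t, ‖fderiv ℝ G (t, y) (1, 0)‖ₑ := by
    filter_upwards [hint.prod_left_ae, h₁.prod_left_ae] with y hGy hDy x
    refine enorm_le_lintegral_enorm_deriv (fun t => ?_) hGy hDy x
    exact (hG _).hasFDerivAt.comp_hasDerivAt t ((hasDerivAt_id t).prodMk (hasDerivAt_const t y))
  filter_upwards [Measure.quasiMeasurePreserving_snd.ae hslice] with z hz using hz z.1

theorem ae_enorm_le_lintegral_enorm_partial_snd {G : ℝ × ℝ → ℝ} (hG : Differentiable ℝ G)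
    (hint : Integrable G) (h₂ : Integrable fun z => fderiv ℝ G z (0, 1)) :
    ∀ᵐ z : ℝ × ℝ, ‖G z‖ₑ ≤ ∫⁻ s, ‖fderiv ℝ G (z.1, s) (0, 1)‖ₑ := by
  rw [Measure.volume_eq_prod] at hint h₂ ⊢
  have hslice : ∀ᵐ x : ℝ, ∀ y, ‖G (x, y)‖ₑ ≤ ∫⁻ s, ‖fderiv ℝ G (x, s) (0, 1)‖ₑ := by
    filter_upwards [hint.prod_right_ae, h₂.prod_right_ae] with x hGx hDx y
    refine enorm_le_lintegral_enorm_deriv (fun s => ?_) hGx hDx y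
    exact (hG _).hasFDerivAt.comp_hasDerivAt s ((hasDerivAt_const s x).prodMk (hasDerivAt_id s))
  filter_upwards [Measure.quasiMeasurePreserving_fst.ae hslice] with z hz using hz z.2

theorem lintegral_enorm_sq_le_mul_lintegral_enorm_partial {G : ℝ × ℝ → ℝ}
    (hG : Differentiable ℝ G) (hint : Integrable G)
    (h₁ : Integrable fun z => fderiv ℝ G z (1, 0)) (h₂ : Integrable fun z => fderiv ℝ G z (0, 1)) :
    ∫⁻ z, ‖G z‖ₑ ^ 2 ≤
      (∫⁻ z, ‖fderiv ℝ G z (1, 0)‖ₑ) * ∫⁻ z, ‖fderiv ℝ G z (0, 1)‖ₑ := by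
  have hm₁ : Measurable fun z => ‖fderiv ℝ G z (1, 0)‖ₑ :=
    (measurable_fderiv_apply_const ℝ G _).enorm
  have hm₂ : Measurable fun z => ‖fderiv ℝ G z (0, 1)‖ₑ :=
    (measurable_fderiv_apply_const ℝ G _).enorm
  calc ∫⁻ z, ‖G z‖ₑ ^ 2
      ≤ ∫⁻ z : ℝ × ℝ, (∫⁻ s, ‖fderiv ℝ G (z.1, s) (0, 1)‖ₑ) *
          ∫⁻ t, ‖fderiv ℝ G (t, z.2) (1, 0)‖ₑ := by
        refine lintegral_mono_ae ?_
        filter_upwards [ae_enorm_le_lintegral_enorm_partial_fst hG hint h₁,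
          ae_enorm_le_lintegral_enorm_partial_snd hG hint h₂] with z hz₁ hz₂
        rw [sq]
        exact mul_le_mul' hz₂ hz₁
    _ = (∫⁻ x, ∫⁻ s, ‖fderiv ℝ G (x, s) (0, 1)‖ₑ) *
          ∫⁻ y, ∫⁻ t, ‖fderiv ℝ G (t, y) (1, 0)‖ₑ := by
        rw [Measure.volume_eq_prod]
        exact lintegral_prod_mul (hm₂.lintegral_prod_right').aemeasurable
          (hm₁.lintegral_prod_left').aemeasurable
    _ = _ := by
        rw [Measure.volume_eq_prod, lintegral_prod _ hm₂.aemeasurable,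
          lintegral_prod_symm _ hm₁.aemeasurable, mul_comm]

local notation "ℝ²" => EuclideanSpace ℝ (Fin 2)

def prodEquivEuclidean : (ℝ × ℝ) ≃L[ℝ] ℝ² :=
  (ContinuousLinearEquiv.finTwoArrow ℝ ℝ).symm.trans (EuclideanSpace.equiv (Fin 2) ℝ).symm

theorem measurePreserving_prodEquivEuclidean :
    MeasurePreserving prodEquivEuclidean volume volume :=
  (PiLp.volume_preserving_toLp (Fin 2)).comp (volume_preserving_finTwoArrow ℝ).symm

theorem enorm_prodEquivEuclidean_one_zero : ‖prodEquivEuclidean (1, 0)‖ₑ = 1 := by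
  simp [← ofReal_norm, prodEquivEuclidean, EuclideanSpace.norm_eq, Fin.sum_univ_two]

theorem enorm_prodEquivEuclidean_zero_one : ‖prodEquivEuclidean (0, 1)‖ₑ = 1 := by
  simp [← ofReal_norm, prodEquivEuclidean, EuclideanSpace.norm_eq, Fin.sum_univ_two]

theorem lintegral_enorm_sq_le_sq_lintegral_enorm_fderiv {g : ℝ² → ℝ} (hg : Differentiable ℝ g)
    (hint : Integrable g) : ∫⁻ x, ‖g x‖ₑ ^ 2 ≤ (∫⁻ x, ‖fderiv ℝ g x‖ₑ) ^ 2 := by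
  by_cases hD : ∫⁻ x, ‖fderiv ℝ g x‖ₑ = ⊤
  · simp [hD]
  let L := prodEquivEuclidean
  have hL := measurePreserving_prodEquivEuclidean
  have hLemb : MeasurableEmbedding L := L.toHomeomorph.toMeasurableEquiv.measurableEmbedding
  have hfderiv : ∀ z v, fderiv ℝ (g ∘ L) z v = fderiv ℝ g (L z) (L v) := fun z v => by
    rw [((hg (L z)).hasFDerivAt.comp z L.hasFDerivAt).fderiv]; rfl
  have hpartial : ∀ v, ‖L v‖ₑ = 1 →
      (∫⁻ z, ‖fderiv ℝ (g ∘ L) z v‖ₑ) ≤ ∫⁻ x, ‖fderiv ℝ g x‖ₑ ∧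
        Integrable fun z => fderiv ℝ (g ∘ L) z v := by
    intro v hv
    have hle : (∫⁻ z, ‖fderiv ℝ (g ∘ L) z v‖ₑ) ≤ ∫⁻ x, ‖fderiv ℝ g x‖ₑ := by
      rw [← hL.lintegral_comp_emb hLemb]
      refine lintegral_mono fun z => ?_
      rw [hfderiv]
      simpa [hv] using (fderiv ℝ g (L z)).le_opENorm (L v)
    exact ⟨hle, (measurable_fderiv_apply_const ℝ _ v).aestronglyMeasurable,
      hle.trans_lt (lt_top_iff_ne_top.2 hD)⟩
  obtain ⟨hle₁, hint₁⟩ := hpartial (1, 0) enorm_prodEquivEuclidean_one_zero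
  obtain ⟨hle₂, hint₂⟩ := hpartial (0, 1) enorm_prodEquivEuclidean_zero_one
  calc ∫⁻ x, ‖g x‖ₑ ^ 2 = ∫⁻ z, ‖(g ∘ L) z‖ₑ ^ 2 :=
        (hL.lintegral_comp_emb hLemb _).symm
    _ ≤ (∫⁻ z, ‖fderiv ℝ (g ∘ L) z (1, 0)‖ₑ) * ∫⁻ z, ‖fderiv ℝ (g ∘ L) z (0, 1)‖ₑ :=
        lintegral_enorm_sq_le_mul_lintegral_enorm_partial (hg.comp L.differentiable)
          ((hL.integrable_comp_emb hLemb).2 hint) hint₁ hint₂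
    _ ≤ (∫⁻ x, ‖fderiv ℝ g x‖ₑ) ^ 2 := by
        rw [sq]
        exact mul_le_mul' hle₁ hle₂

section Integrals

variable {α : Type*} [MeasureSpace α]

def powIntegral (f : α → ℝ) (r : ℝ) : ℝ≥0∞ := ∫⁻ x, ENNReal.ofReal (f x) ^ r

theorem eLpNorm_ofReal_eq_powIntegral_rpow {f : α → ℝ} (hf0 : ∀ x, 0 ≤ f x) {p : ℝ}
    (hp : 0 < p) : eLpNorm f (ENNReal.ofReal p) volume = powIntegral f p ^ (1 / p) := by
  rw [eLpNorm_eq_lintegral_rpow_enorm_toReal (by simpa using hp) ENNReal.ofReal_ne_top,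
    ENNReal.toReal_ofReal hp.le, powIntegral]
  simp_rw [Real.enorm_eq_ofReal (hf0 _)]

theorem powIntegral_le_rpow_mul_rpow {f : α → ℝ} (hf : Measurable f) {a b θ : ℝ}
    (ha : 0 ≤ a) (hb : 0 ≤ b) (hθ₀ : 0 ≤ θ) (hθ₁ : θ ≤ 1) :
    powIntegral f (θ * a + (1 - θ) * b) ≤ powIntegral f a ^ θ * powIntegral f b ^ (1 - θ) := by
  have hF : Measurable fun x => ENNReal.ofReal (f x) := ENNReal.measurable_ofReal.comp hf
  calc powIntegral f (θ * a + (1 - θ) * b)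
      = ∫⁻ x, (ENNReal.ofReal (f x) ^ a) ^ θ * (ENNReal.ofReal (f x) ^ b) ^ (1 - θ) := by
        refine lintegral_congr fun x => ?_
        rw [← ENNReal.rpow_mul, ← ENNReal.rpow_mul, mul_comm a, mul_comm b,
          ENNReal.rpow_add_of_nonneg _ _ (by positivity) (by nlinarith)]
    _ ≤ _ := ENNReal.lintegral_mul_norm_pow_le (hF.pow_const a).aemeasurable
        (hF.pow_const b).aemeasurable hθ₀ (by linarith) (by ring)

end Integrals

section Fisher

variable {E : Type*} [NormedAddCommGroup E] [NormedSpace ℝ E]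

theorem fderiv_eq_zero_of_nonneg_of_eq_zero {f : E → ℝ} (hf0 : ∀ x, 0 ≤ f x) {x : E}
    (hx : f x = 0) : fderiv ℝ f x = 0 :=
  IsLocalMin.fderiv_eq_zero (Eventually.of_forall fun y => hx ▸ hf0 y)

variable [MeasureSpace E]

def fisherInfo (f : E → ℝ) : ℝ≥0∞ := ∫⁻ x, ENNReal.ofReal (‖fderiv ℝ f x‖ ^ 2 / f x)

structure IsDensityWithFiniteFisherInfo (f : E → ℝ) : Prop where
  differentiable : Differentiable ℝ f
  nonneg : ∀ x, 0 ≤ f x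
  powIntegral_one : powIntegral f 1 = 1
  fisherInfo_ne_top : fisherInfo f ≠ ⊤

/-- Hölder's inequality for the splitting
`|∇f| ^ (2t) f ^ ((1-t)a - t) = (f ^ a) ^ (1 - t) (|∇f|² / f) ^ t`. -/
theorem lintegral_enorm_fderiv_rpow_mul_le [OpensMeasurableSpace E] {f : E → ℝ}
    (hf : Measurable f) (hf0 : ∀ x, 0 ≤ f x) {t : ℝ} (ht₀ : 0 < t) (ht₁ : t ≤ 1) (a : ℝ) :
    ∫⁻ x, ‖fderiv ℝ f x‖ₑ ^ (2 * t) * ENNReal.ofReal (f x) ^ ((1 - t) * a - t) ≤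
      powIntegral f a ^ (1 - t) * fisherInfo f ^ t := by
  have hpointwise : ∀ x, ‖fderiv ℝ f x‖ₑ ^ (2 * t) * ENNReal.ofReal (f x) ^ ((1 - t) * a - t) =
      (ENNReal.ofReal (f x) ^ a) ^ (1 - t) * ENNReal.ofReal (‖fderiv ℝ f x‖ ^ 2 / f x) ^ t := by
    intro x
    rcases (hf0 x).eq_or_lt with hx | hx
    · rw [fderiv_eq_zero_of_nonneg_of_eq_zero hf0 hx.symm, ← hx, ← ofReal_norm, norm_zero]
      simp [ht₀]
    rw [← ofReal_norm, ENNReal.ofReal_rpow_of_nonneg (norm_nonneg _) (by positivity),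
      ENNReal.ofReal_rpow_of_pos hx, ENNReal.ofReal_rpow_of_pos hx,
      ENNReal.ofReal_rpow_of_pos (Real.rpow_pos_of_pos hx a),
      ENNReal.ofReal_rpow_of_nonneg (by positivity) ht₀.le, ← ENNReal.ofReal_mul (by positivity),
      ← ENNReal.ofReal_mul (by positivity), Real.div_rpow (by positivity) hx.le,
      ← Real.rpow_mul hx.le, Real.rpow_sub hx, ← Real.rpow_natCast_mul (norm_nonneg _)]
    push_cast
    field_simp
  rw [lintegral_congr hpointwise]
  exact ENNReal.lintegral_mul_norm_pow_le
    ((ENNReal.measurable_ofReal.comp hf).pow_const a).aemeasurable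
    (ENNReal.measurable_ofReal.comp
      (((measurable_fderiv ℝ f).norm.pow_const 2).div hf)).aemeasurable
    (by linarith) ht₀.le (by ring)

end Fisher

section Gradient

variable {E : Type*} [NormedAddCommGroup E] [InnerProductSpace ℝ E] [CompleteSpace E]

theorem norm_gradient (f : E → ℝ) (x : E) : ‖gradient f x‖ = ‖fderiv ℝ f x‖ :=
  (InnerProductSpace.toDual ℝ E).symm.norm_map _

variable [MeasureSpace E]

theorem ofReal_integral_eq_fisherInfo {f : E → ℝ} (hf0 : ∀ x, 0 ≤ f x)
    (hfish : Integrable fun x => ‖gradient f x‖ ^ 2 / f x) :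
    ENNReal.ofReal (∫ x, ‖gradient f x‖ ^ 2 / f x) = fisherInfo f := by
  rw [ofReal_integral_eq_lintegral_ofReal hfish
    (Eventually.of_forall fun x => div_nonneg (sq_nonneg _) (hf0 x))]
  simp_rw [norm_gradient]
  rfl

theorem IsDensityWithFiniteFisherInfo.of_integral_eq_one {f : E → ℝ} (hf : Differentiable ℝ f)
    (hf0 : ∀ x, 0 ≤ f x) (hf1 : ∫ x, f x = 1)
    (hfish : Integrable fun x => ‖gradient f x‖ ^ 2 / f x) :
    IsDensityWithFiniteFisherInfo f where
  differentiable := hf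
  nonneg := hf0
  powIntegral_one := by
    simp_rw [powIntegral, ENNReal.rpow_one, ← ofReal_integral_eq_lintegral_ofReal
      (integrable_of_integral_eq_one hf1) (Eventually.of_forall hf0), hf1, ENNReal.ofReal_one]
  fisherInfo_ne_top := ofReal_integral_eq_fisherInfo hf0 hfish ▸ ENNReal.ofReal_ne_top

end Gradient

theorem powIntegral_le_mul_powIntegral_sub_one_mul_fisherInfo {f : ℝ² → ℝ}
    (hf : Differentiable ℝ f) (hf0 : ∀ x, 0 ≤ f x) {r : ℝ} (hr : 2 ≤ r)
    (hhalf : powIntegral f (r / 2) ≠ ⊤) :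
    powIntegral f r ≤ ENNReal.ofReal (r / 2) ^ 2 * powIntegral f (r - 1) * fisherInfo f := by
  set s := r / 2 with hs
  have hs₁ : 1 ≤ s := by linarith
  have hfm : Measurable f := hf.continuous.measurable
  have hg : ∀ x, HasFDerivAt (fun y => f y ^ s) ((s * f x ^ (s - 1)) • fderiv ℝ f x) x :=
    fun x => (Real.hasDerivAt_rpow_const (Or.inr hs₁)).comp_hasFDerivAt x (hf x).hasFDerivAt
  have henorm : ∀ x, ‖f x ^ s‖ₑ = ENNReal.ofReal (f x) ^ s := fun x => by
    rw [Real.enorm_eq_ofReal (Real.rpow_nonneg (hf0 x) s),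
      ENNReal.ofReal_rpow_of_nonneg (hf0 x) (by linarith)]
  have hgint : Integrable fun x => f x ^ s :=
    ⟨(hfm.pow_const s).aestronglyMeasurable, by
      simpa only [HasFiniteIntegral, henorm, powIntegral] using lt_top_iff_ne_top.2 hhalf⟩
  have hCS := lintegral_enorm_fderiv_rpow_mul_le hfm hf0 one_half_pos one_half_lt_one.le (r - 1)
  rw [show 2 * (1 / 2 : ℝ) = 1 by norm_num, show (1 - 1 / 2) * (r - 1) - 1 / 2 = s - 1 by ring,
    show (1 : ℝ) - 1 / 2 = 1 / 2 by norm_num] at hCS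
  simp only [ENNReal.rpow_one] at hCS
  have hDg : ∫⁻ x, ‖fderiv ℝ (fun y => f y ^ s) x‖ₑ ≤
      ENNReal.ofReal s * (powIntegral f (r - 1) ^ (1 / 2 : ℝ) * fisherInfo f ^ (1 / 2 : ℝ)) := by
    calc ∫⁻ x, ‖fderiv ℝ (fun y => f y ^ s) x‖ₑ
        = ∫⁻ x, ENNReal.ofReal s * (‖fderiv ℝ f x‖ₑ * ENNReal.ofReal (f x) ^ (s - 1)) := by
          refine lintegral_congr fun x => ?_
          rw [(hg x).fderiv, enorm_smul,
            Real.enorm_eq_ofReal (mul_nonneg (by linarith) (Real.rpow_nonneg (hf0 x) _)),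
            ENNReal.ofReal_mul (by linarith),
            ← ENNReal.ofReal_rpow_of_nonneg (hf0 x) (by linarith)]
          ring
      _ ≤ _ := by
          rw [lintegral_const_mul' _ _ ENNReal.ofReal_ne_top]
          gcongr
  have hsq : ∀ y : ℝ≥0∞, (y ^ (1 / 2 : ℝ)) ^ 2 = y := fun y => by
    rw [← ENNReal.rpow_natCast, ← ENNReal.rpow_mul]
    norm_num
  calc powIntegral f r = ∫⁻ x, ‖f x ^ s‖ₑ ^ 2 := by
        refine lintegral_congr fun x => ?_
        rw [henorm, ← ENNReal.rpow_natCast, ← ENNReal.rpow_mul, hs]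
        norm_num
    _ ≤ (∫⁻ x, ‖fderiv ℝ (fun y => f y ^ s) x‖ₑ) ^ 2 :=
        lintegral_enorm_sq_le_sq_lintegral_enorm_fderiv (fun x => (hg x).differentiableAt) hgint
    _ ≤ (ENNReal.ofReal s * (powIntegral f (r - 1) ^ (1 / 2 : ℝ) *
          fisherInfo f ^ (1 / 2 : ℝ))) ^ 2 := by gcongr
    _ = ENNReal.ofReal s ^ 2 * powIntegral f (r - 1) * fisherInfo f := by
        rw [mul_pow, mul_pow, hsq, hsq, mul_assoc]

namespace IsDensityWithFiniteFisherInfo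

variable {f : ℝ² → ℝ}

theorem powIntegral_two_le (hf : IsDensityWithFiniteFisherInfo f) :
    powIntegral f 2 ≤ fisherInfo f := by
  have h := powIntegral_le_mul_powIntegral_sub_one_mul_fisherInfo hf.differentiable hf.nonneg
    le_rfl (by norm_num [hf.powIntegral_one])
  norm_num [hf.powIntegral_one] at h
  exact h

theorem powIntegral_le_of_le_two (hf : IsDensityWithFiniteFisherInfo f) {r : ℝ} (hr₁ : 1 ≤ r)
    (hr₂ : r ≤ 2) : powIntegral f r ≤ fisherInfo f ^ (r - 1) := by
  have h := powIntegral_le_rpow_mul_rpow hf.differentiable.continuous.measurable zero_le_one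
    zero_le_two (θ := 2 - r) (by linarith) (by linarith)
  rw [show (2 - r) * 1 + (1 - (2 - r)) * 2 = r by ring, show 1 - (2 - r) = r - 1 by ring,
    hf.powIntegral_one, ENNReal.one_rpow, one_mul] at h
  exact h.trans (ENNReal.rpow_le_rpow hf.powIntegral_two_le (by linarith))

end IsDensityWithFiniteFisherInfo

theorem exists_powIntegral_le_of_le_nat {n : ℕ} (hn : 2 ≤ n) :
    ∃ K : ℝ≥0, ∀ f : ℝ² → ℝ, IsDensityWithFiniteFisherInfo f → ∀ r : ℝ, 1 ≤ r → r ≤ n →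
      powIntegral f r ≤ K * fisherInfo f ^ (r - 1) := by
  induction n, hn using Nat.le_induction with
  | base =>
    refine ⟨1, fun f hf r hr₁ hr₂ => ?_⟩
    simpa using hf.powIntegral_le_of_le_two hr₁ (by exact_mod_cast hr₂)
  | succ n hn ih =>
    obtain ⟨K, hK⟩ := ih
    refine ⟨(n + 1) ^ 2 * K, fun f hf r hr₁ hr => ?_⟩
    push_cast at hr ⊢
    rcases le_or_gt r n with hrn | hrn
    · calc powIntegral f r ≤ K * fisherInfo f ^ (r - 1) := hK f hf r hr₁ hrn
        _ ≤ _ := by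
          rw [mul_assoc]
          exact le_mul_of_one_le_left zero_le (one_le_pow₀ le_add_self)
    have hn2 : (2 : ℝ) ≤ n := by exact_mod_cast hn
    have hhalf : powIntegral f (r / 2) ≠ ⊤ :=
      ne_top_of_le_ne_top (ENNReal.mul_ne_top ENNReal.coe_ne_top
        (ENNReal.rpow_ne_top_of_nonneg (by linarith) hf.fisherInfo_ne_top))
        (hK f hf (r / 2) (by linarith) (by linarith))
    calc powIntegral f r
        ≤ ENNReal.ofReal (r / 2) ^ 2 * powIntegral f (r - 1) * fisherInfo f :=
          powIntegral_le_mul_powIntegral_sub_one_mul_fisherInfo hf.differentiable hf.nonneg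
            (by linarith) hhalf
      _ ≤ ENNReal.ofReal (r / 2) ^ 2 * (K * fisherInfo f ^ (r - 1 - 1)) * fisherInfo f := by
          gcongr
          exact hK f hf (r - 1) (by linarith) (by linarith)
      _ = ENNReal.ofReal (r / 2) ^ 2 * K * fisherInfo f ^ (r - 1) := by
          conv_rhs => rw [show r - 1 = r - 1 - 1 + 1 by ring,
            ENNReal.rpow_add_of_nonneg _ _ (by linarith) zero_le_one, ENNReal.rpow_one]
          ring
      _ ≤ _ := by
          gcongr
          calc ENNReal.ofReal (r / 2) ≤ ENNReal.ofReal (n + 1) :=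
                ENNReal.ofReal_le_ofReal (by linarith)
            _ = n + 1 := by rw [← Nat.cast_add_one, ENNReal.ofReal_natCast, Nat.cast_add_one]

theorem exists_powIntegral_le_fisherInfo_rpow {r : ℝ} (hr : 1 ≤ r) :
    ∃ K : ℝ≥0, ∀ f : ℝ² → ℝ, IsDensityWithFiniteFisherInfo f →
      powIntegral f r ≤ K * fisherInfo f ^ (r - 1) := by
  obtain ⟨K, hK⟩ := exists_powIntegral_le_of_le_nat (le_max_left 2 ⌈r⌉₊)
  exact ⟨K, fun f hf => hK f hf r hr
    ((Nat.le_ceil r).trans (by exact_mod_cast le_max_right 2 ⌈r⌉₊))⟩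

theorem exists_eLpNorm_le_fisherInfo_rpow {p : ℝ} (hp : 1 ≤ p) :
    ∃ C : ℝ≥0, ∀ f : ℝ² → ℝ, IsDensityWithFiniteFisherInfo f →
      eLpNorm f (ENNReal.ofReal p) volume ≤ C * fisherInfo f ^ (1 - 1 / p) := by
  obtain ⟨K, hK⟩ := exists_powIntegral_le_fisherInfo_rpow hp
  refine ⟨K ^ (1 / p), fun f hf => ?_⟩
  rw [eLpNorm_ofReal_eq_powIntegral_rpow hf.nonneg (by linarith)]
  calc powIntegral f p ^ (1 / p) ≤ (K * fisherInfo f ^ (p - 1)) ^ (1 / p) := by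
        gcongr
        exact hK f hf
    _ = _ := by
        rw [ENNReal.coe_mul_rpow_rpow _ _ _ (by positivity)]
        congr 2
        field_simp

theorem exists_eLpNorm_fderiv_le_fisherInfo_rpow {q : ℝ} (hq₁ : 1 ≤ q) (hq₂ : q < 2) :
    ∃ C : ℝ≥0, ∀ f : ℝ² → ℝ, IsDensityWithFiniteFisherInfo f →
      eLpNorm (fderiv ℝ f) (ENNReal.ofReal q) volume ≤ C * fisherInfo f ^ (3 / 2 - 1 / q) := by
  have h2q : 2 - q ≠ 0 := (sub_pos.2 hq₂).ne'
  set a := q / (2 - q) with ha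
  have ha₁ : 1 ≤ a := by rw [ha, le_div_iff₀ (by linarith)]; linarith
  obtain ⟨K, hK⟩ := exists_powIntegral_le_fisherInfo_rpow ha₁
  refine ⟨K ^ ((2 - q) / (2 * q)), fun f hf => ?_⟩
  have hHolder := lintegral_enorm_fderiv_rpow_mul_le hf.differentiable.continuous.measurable
    hf.nonneg (t := q / 2) (by linarith) (by linarith) a
  rw [show 2 * (q / 2) = q by ring, show (1 - q / 2) * a - q / 2 = 0 by
    rw [ha]; field_simp; ring] at hHolder
  simp only [ENNReal.rpow_zero, mul_one] at hHolder
  have hmain : ∫⁻ x, ‖fderiv ℝ f x‖ₑ ^ q ≤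
      ((K ^ (1 - q / 2) : ℝ≥0) : ℝ≥0∞) * fisherInfo f ^ (3 * q / 2 - 1) :=
    calc ∫⁻ x, ‖fderiv ℝ f x‖ₑ ^ q ≤ powIntegral f a ^ (1 - q / 2) * fisherInfo f ^ (q / 2) :=
          hHolder
      _ ≤ (K * fisherInfo f ^ (a - 1)) ^ (1 - q / 2) * fisherInfo f ^ (q / 2) := by
          gcongr
          · linarith
          · exact hK f hf
      _ = ((K ^ (1 - q / 2) : ℝ≥0) : ℝ≥0∞) * fisherInfo f ^ (3 * q / 2 - 1) := by
          rw [ENNReal.coe_mul_rpow_rpow _ _ _ (by linarith), mul_assoc,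
            ← ENNReal.rpow_add_of_nonneg _ _ (by nlinarith) (by linarith)]
          congr 2
          rw [ha]
          field_simp
          ring
  rw [eLpNorm_eq_lintegral_rpow_enorm_toReal (by simp; linarith) ENNReal.ofReal_ne_top,
    ENNReal.toReal_ofReal (by linarith)]
  calc (∫⁻ x, ‖fderiv ℝ f x‖ₑ ^ q) ^ (1 / q)
      ≤ (((K ^ (1 - q / 2) : ℝ≥0) : ℝ≥0∞) * fisherInfo f ^ (3 * q / 2 - 1)) ^ (1 / q) := by
        gcongr
    _ = _ := by
        rw [ENNReal.coe_mul_rpow_rpow _ _ _ (by positivity), ← NNReal.rpow_mul]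
        congr 3 <;> field_simp

/-- Let `f` be a (weakly) differentiable probability density on `ℝ²`
with finite Fisher information `I(f) = ∫ ‖∇f‖²/f`.  Then:
(a) for every `p ∈ [1,∞)` there is a constant `C_p` (independent of `f`) with
`‖f‖_{L^p} ≤ C_p I(f)^{1−1/p}`; (b) for every `q ∈ [1,2)` there is a constant `C_q`
(independent of `f`) with `‖∇f‖_{L^q} ≤ C_q I(f)^{3/2−1/q}`. -/
theorem lp_bounds_by_fisher (p q : ℝ) (hp : 1 ≤ p) (hq : q ∈ Set.Ico (1 : ℝ) 2) :
    ∃ Cp Cq : ℝ, ∀ f : EuclideanSpace ℝ (Fin 2) → ℝ,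
      Differentiable ℝ f → (∀ x, 0 ≤ f x) → (∫ x, f x) = 1 →
      Integrable (fun x => ‖gradient f x‖ ^ 2 / f x) →
      eLpNorm f (ENNReal.ofReal p) volume
          ≤ ENNReal.ofReal (Cp * (∫ x, ‖gradient f x‖ ^ 2 / f x) ^ (1 - 1 / p)) ∧
      eLpNorm (fun x => gradient f x) (ENNReal.ofReal q) volume
          ≤ ENNReal.ofReal (Cq * (∫ x, ‖gradient f x‖ ^ 2 / f x) ^ (3 / 2 - 1 / q)) := by
  obtain ⟨Cp, hCp⟩ := exists_eLpNorm_le_fisherInfo_rpow hp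
  obtain ⟨Cq, hCq⟩ := exists_eLpNorm_fderiv_le_fisherInfo_rpow hq.1 hq.2
  refine ⟨Cp, Cq, fun f hd h0 h1 hfish => ?_⟩
  have hf := IsDensityWithFiniteFisherInfo.of_integral_eq_one hd h0 h1 hfish
  have hI₀ : 0 ≤ ∫ x, ‖gradient f x‖ ^ 2 / f x :=
    integral_nonneg fun x => div_nonneg (sq_nonneg _) (h0 x)
  have hp₀ : 0 ≤ 1 - 1 / p := by
    rw [sub_nonneg, div_le_one (by linarith)]
    exact hp
  have hq₀ : 0 ≤ 3 / 2 - 1 / q := by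
    have : 1 / q ≤ 1 := by rw [div_le_one (by linarith [hq.1])]; exact hq.1
    linarith
  rw [ENNReal.ofReal_coe_mul_rpow _ hI₀ hp₀, ENNReal.ofReal_coe_mul_rpow _ hI₀ hq₀,
    ofReal_integral_eq_fisherInfo h0 hfish,
    eLpNorm_congr_norm_ae (Eventually.of_forall (norm_gradient f))]
  exact ⟨hCp f hf, hCq f hf⟩
end
end
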